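/- There exists a constant C > 0 such that for all integers n ≥ 2, B ≥ 1 and 1 ≤ n' ≤ n the following holds. Let Z_1, ..., Z_{n'} be i.i.d. uniform on {1,...,B}, and for a bin b and time t let L_b(t) = |{r ≤ t : Z_r = b}|. Then with probability at least 1 − C/n^{11}, for every integer i with B·(log n)^4 ≤ i ≤ n' and every bin b ∈ {1,...,B}, the load satisfies |L_b(i) − i/B| ≤ (1/20)·d(i/B). -/

import Mathlib

/-!
The load `L_b(i)` is a sum of `i` independent Bernoulli(`1/B`) indicators, so its moment
generating function is dominated by that of a Poisson variable of mean `y = i/B`, and Chernoff's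
bound gives `P(|L_b(i) - y| > t) ≤ 2 exp(-t²/(4y))` for `0 < t ≤ 2y`. For `t = d(y)/20 ≍ y^(2/3)`
and `y ≥ (log n)^4` the exponent is `≳ y^(1/3) ≥ 13 log n` once `log n` exceeds an absolute
constant, and a union bound over at most `n` times and `n` bins costs a factor `n²`. Small `n`
are absorbed into the constant `C`.
-/

open MeasureTheory
open scoped ENNReal

/-- The distribution of `n'` balls thrown independently and uniformly into `B` bins. -/
noncomputable def uniformBins (n' B : ℕ) : Measure (Fin n' → Fin B) :=
  Measure.pi fun _ => ((B : ℝ≥0∞)⁻¹ • Measure.count)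

/-- `load z b t`: the number of balls among the first `t` that land in bin `b`. -/
def load {n' B : ℕ} (z : Fin n' → Fin B) (b : Fin B) (t : ℕ) : ℕ :=
  (Finset.univ.filter fun r : Fin n' => (r : ℕ) < t ∧ z r = b).card

/-- `dFn y = y - ⌈y - (1/2)·y^(2/3)⌉`, so that `⌈y - (1/2)·y^(2/3)⌉ = y - dFn y`. -/
noncomputable def dFn (y : ℝ) : ℝ := y - (⌈y - (1/2) * y ^ ((2:ℝ)/3)⌉ : ℤ)

/-- The bound `m' = ⌈(n'/B) - (1/2)·(n'/B)^(2/3)⌉`. -/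
noncomputable def mBound (n' B : ℕ) : ℤ :=
  ⌈((n' : ℝ)/B) - (1/2) * (((n' : ℝ)/B) ^ ((2:ℝ)/3))⌉

/-- The first time at which some bin's load reaches `m`. -/
noncomputable def hitTime {n' B : ℕ} (z : Fin n' → Fin B) (m : ℤ) : ℕ :=
  sInf {t : ℕ | ∃ b : Fin B, m ≤ (load z b t : ℤ)}

open ProbabilityTheory Real Finset

section PoissonTail

variable {Ω : Type*} [MeasurableSpace Ω] {μ : Measure Ω} [IsFiniteMeasure μ] {X : Ω → ℝ}
  {y t : ℝ}

/-- The hypothesis `t ≤ 2 y` keeps the Chernoff parameter `t / (2 y)` in `[0, 1]`, where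
`exp s ≤ 1 + s + s ^ 2`. -/
theorem measureReal_lt_abs_sub_le_of_mgf_le
    (hint : ∀ s, Integrable (fun ω ↦ exp (s * X ω)) μ)
    (hmgf : ∀ s, mgf X μ s ≤ exp (y * (exp s - 1))) (ht : 0 < t) (hty : t ≤ 2 * y) :
    μ.real {ω | t < |X ω - y|} ≤ 2 * exp (-(t ^ 2 / (4 * y))) := by
  have hy : 0 < y := by linarith
  set s := t / (2 * y) with hs
  have hs0 : 0 ≤ s := by positivity
  have hs1 : |s| ≤ 1 := by
    rw [abs_of_nonneg hs0, hs, div_le_one (by positivity)]; exact hty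
  have hexp := (abs_le.mp (abs_exp_sub_one_sub_id_le hs1)).2
  have hexp' := (abs_le.mp (abs_exp_sub_one_sub_id_le (x := -s) (by rwa [abs_neg]))).2
  have hopt : -(s * t) + y * s ^ 2 = -(t ^ 2 / (4 * y)) := by
    rw [hs]; field_simp; ring
  have upper : μ.real {ω | y + t ≤ X ω} ≤ exp (-(t ^ 2 / (4 * y))) := calc
    _ ≤ exp (-s * (y + t)) * mgf X μ s := measure_ge_le_exp_mul_mgf _ hs0 (hint s)
    _ ≤ exp (-s * (y + t)) * exp (y * (exp s - 1)) := by gcongr; exact hmgf s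
    _ ≤ exp (-(t ^ 2 / (4 * y))) := by
      rw [← exp_add, ← hopt, exp_le_exp]; nlinarith [hexp]
  have lower : μ.real {ω | X ω ≤ y - t} ≤ exp (-(t ^ 2 / (4 * y))) := calc
    _ ≤ exp (-(-s) * (y - t)) * mgf X μ (-s) :=
      measure_le_le_exp_mul_mgf _ (neg_nonpos.mpr hs0) (hint (-s))
    _ ≤ exp (-(-s) * (y - t)) * exp (y * (exp (-s) - 1)) := by gcongr; exact hmgf (-s)
    _ ≤ exp (-(t ^ 2 / (4 * y))) := by
      rw [← exp_add, ← hopt, exp_le_exp]; nlinarith [hexp']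
  have hsub : {ω | t < |X ω - y|} ⊆ {ω | y + t ≤ X ω} ∪ {ω | X ω ≤ y - t} := by
    intro ω hω
    rcases lt_abs.mp (show t < |X ω - y| from hω) with h | h
    · exact Or.inl (show y + t ≤ X ω by linarith)
    · exact Or.inr (show X ω ≤ y - t by linarith)
  calc μ.real {ω | t < |X ω - y|}
      ≤ μ.real {ω | y + t ≤ X ω} + μ.real {ω | X ω ≤ y - t} :=
        (measureReal_mono hsub).trans (measureReal_union_le _ _)
    _ ≤ 2 * exp (-(t ^ 2 / (4 * y))) := by linarith

end PoissonTail

lemma ofReal_one_sub_le_of_measureReal_compl_le {Ω : Type*} [MeasurableSpace Ω] {μ : Measure Ω}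
    [IsProbabilityMeasure μ] {s : Set Ω} {ε : ℝ} (hs : MeasurableSet s) (h : μ.real sᶜ ≤ ε) :
    ENNReal.ofReal (1 - ε) ≤ μ s := by
  rw [← ofReal_measureReal, ← probReal_add_probReal_compl (μ := μ) hs]
  exact ENNReal.ofReal_le_ofReal (by linarith)

lemma dFn_le (y : ℝ) : dFn y ≤ y ^ ((2 : ℝ) / 3) / 2 := by
  have := Int.le_ceil (y - 1 / 2 * y ^ ((2 : ℝ) / 3))
  rw [dFn]; linarith

lemma lt_dFn (y : ℝ) : y ^ ((2 : ℝ) / 3) / 2 - 1 < dFn y := by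
  have := Int.ceil_lt_add_one (y - 1 / 2 * y ^ ((2 : ℝ) / 3))
  rw [dFn]; linarith

/-- With `u = y ^ (1/3) ≥ 332800 w` one has `dFn y / 20 ≥ u ^ 2 / 80`, hence
`(dFn y / 20) ^ 2 / (4 y) ≥ u / 25600 ≥ 13 w`. -/
lemma dFn_div_twenty_bounds {w y : ℝ} (hw : 332800 ^ 3 ≤ w) (hy : w ^ 4 ≤ y) :
    0 < 1 / 20 * dFn y ∧ 1 / 20 * dFn y ≤ 2 * y ∧ 13 * w ≤ (1 / 20 * dFn y) ^ 2 / (4 * y) := by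
  have hw0 : 0 < w := lt_of_lt_of_le (by norm_num) hw
  have hy0 : 0 < y := lt_of_lt_of_le (by positivity) hy
  set u := y ^ ((1 : ℝ) / 3) with hu
  have hu0 : 0 < u := by positivity
  have hu3 : u ^ 3 = y := by
    rw [hu, ← rpow_natCast, ← rpow_mul hy0.le]; norm_num
  have hu2 : y ^ ((2 : ℝ) / 3) = u ^ 2 := by
    rw [hu, ← rpow_natCast, ← rpow_mul hy0.le]; norm_num
  have huw : 332800 * w ≤ u := by
    refine le_of_pow_le_pow_left₀ three_ne_zero hu0.le ?_
    rw [hu3]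
    calc (332800 * w) ^ 3 = 332800 ^ 3 * w ^ 3 := by ring
      _ ≤ w * w ^ 3 := by gcongr
      _ = w ^ 4 := by ring
      _ ≤ y := hy
  have hd_lo := lt_dFn y
  have hd_hi := dFn_le y
  rw [hu2] at hd_lo hd_hi
  have hu_two : 2 ≤ u := by nlinarith
  have ht_lo : u ^ 2 / 80 ≤ 1 / 20 * dFn y := by nlinarith
  refine ⟨by nlinarith, by nlinarith, ?_⟩
  rw [le_div_iff₀ (by positivity)]
  calc 13 * w * (4 * y) = 13 * w * (4 * u ^ 3) := by rw [hu3]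
    _ ≤ u / 25600 * (4 * u ^ 3) := by gcongr; linarith
    _ = (u ^ 2 / 80) ^ 2 := by ring
    _ ≤ (1 / 20 * dFn y) ^ 2 := by gcongr

section UniformBins

variable {n' B : ℕ} [NeZero B]

instance isProbabilityMeasure_uniformBin :
    IsProbabilityMeasure ((B : ℝ≥0∞)⁻¹ • Measure.count : Measure (Fin B)) :=
  ⟨by simp [ENNReal.inv_mul_cancel (NeZero.ne (B : ℝ≥0∞))]⟩

instance isProbabilityMeasure_uniformBins : IsProbabilityMeasure (uniformBins n' B) := by
  unfold uniformBins; infer_instance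

omit [NeZero B] in
lemma load_eq_sum (z : Fin n' → Fin B) (b : Fin B) (i : ℕ) :
    (load z b i : ℝ) = ∑ r : Fin n', if (r : ℕ) < i ∧ z r = b then 1 else 0 := by
  rw [load, Finset.card_filter]; push_cast; rfl

lemma mgf_indicator_uniformBin (b : Fin B) (p : Prop) [Decidable p] (t : ℝ) :
    mgf (fun v ↦ if p ∧ v = b then 1 else 0) ((B : ℝ≥0∞)⁻¹ • Measure.count) t =
      if p then 1 + (exp t - 1) / B else 1 := by
  have hB : (B : ℝ) ≠ 0 := NeZero.ne _
  by_cases hp : p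
  · simp only [mgf, hp, true_and, integral_smul_measure, integral_count, smul_eq_mul,
      if_true, ENNReal.toReal_inv, ENNReal.toReal_natCast]
    have hsplit : ∀ v : Fin B,
        exp (t * if v = b then 1 else 0) = (if v = b then exp t - 1 else 0) + 1 := by
      intro v; split_ifs <;> simp
    simp_rw [hsplit, Finset.sum_add_distrib, Finset.sum_ite_eq', Finset.mem_univ, if_true,
      Finset.sum_const, Finset.card_univ, Fintype.card_fin, nsmul_eq_mul, mul_one]
    field_simp
    ring
  · simp [mgf, hp]

theorem mgf_load {i : ℕ} (hi : i ≤ n') (b : Fin B) (t : ℝ) :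
    mgf (fun z ↦ (load z b i : ℝ)) (uniformBins n' B) t = (1 + (exp t - 1) / B) ^ i := by
  set X : Fin n' → (Fin n' → Fin B) → ℝ := fun r z ↦ if (r : ℕ) < i ∧ z r = b then 1 else 0
  have hload : (fun z ↦ (load z b i : ℝ)) = ∑ r, X r := by
    ext z; rw [load_eq_sum, Finset.sum_apply]
  have hindep : iIndepFun X (uniformBins n' B) :=
    iIndepFun_pi (X := fun (r : Fin n') (v : Fin B) ↦ if (r : ℕ) < i ∧ v = b then (1 : ℝ) else 0)
      fun _ ↦ Measurable.of_discrete.aemeasurable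
  have hX : ∀ r, mgf (X r) (uniformBins n' B) t =
      if (r : ℕ) < i then 1 + (exp t - 1) / B else 1 := by
    intro r
    rw [← mgf_indicator_uniformBin b, mgf, mgf, uniformBins]
    exact integral_comp_eval (X := fun _ ↦ Fin B) (i := r)
      (f := fun v ↦ exp (t * if (r : ℕ) < i ∧ v = b then 1 else 0))
      Measurable.of_discrete.aestronglyMeasurable
  rw [hload, hindep.mgf_sum (fun _ ↦ Measurable.of_discrete)]
  simp_rw [hX]
  rw [Finset.prod_ite, prod_const, prod_const_one, mul_one, Fin.card_filter_val_lt,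
    min_eq_right hi]

theorem mgf_load_le {i : ℕ} (hi : i ≤ n') (b : Fin B) (t : ℝ) :
    mgf (fun z ↦ (load z b i : ℝ)) (uniformBins n' B) t ≤ exp (i / B * (exp t - 1)) := by
  have hB : (1 : ℝ) ≤ B := Nat.one_le_cast.mpr (NeZero.one_le)
  have hbase : 0 ≤ 1 + (exp t - 1) / B := by
    have : -1 ≤ (exp t - 1) / B := by
      rw [le_div_iff₀ (by positivity)]; nlinarith [exp_pos t]
    linarith
  calc mgf (fun z ↦ (load z b i : ℝ)) (uniformBins n' B) t = (1 + (exp t - 1) / B) ^ i :=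
        mgf_load hi b t
    _ ≤ exp ((exp t - 1) / B) ^ i := by
        gcongr; linarith [add_one_le_exp ((exp t - 1) / B)]
    _ = exp (i / B * (exp t - 1)) := by
        rw [← exp_nat_mul]; ring_nf

theorem measureReal_load_far_le {w : ℝ} (hw : 332800 ^ 3 ≤ w) {i : ℕ} (hBi : B * w ^ 4 ≤ i)
    (hi : i ≤ n') (b : Fin B) :
    (uniformBins n' B).real {z | 1 / 20 * dFn (i / B) < |(load z b i : ℝ) - i / B|} ≤
      2 * exp (-(13 * w)) := by
  have hB : (0 : ℝ) < B := Nat.cast_pos.mpr (NeZero.pos B)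
  obtain ⟨ht0, ht2, h13⟩ := dFn_div_twenty_bounds hw (y := i / B)
    (by rw [le_div_iff₀ hB]; linarith)
  calc _ ≤ 2 * exp (-((1 / 20 * dFn (i / B)) ^ 2 / (4 * (i / B)))) :=
        measureReal_lt_abs_sub_le_of_mgf_le (fun _ ↦ Integrable.of_finite) (mgf_load_le hi b)
          ht0 ht2
    _ ≤ 2 * exp (-(13 * w)) := by gcongr

theorem measureReal_exists_load_far_le {n : ℕ} (hn : 332800 ^ 3 ≤ log n) (hn' : n' ≤ n) :
    (uniformBins n' B).real {z | ∃ i : ℕ, ∃ b : Fin B, B * log n ^ 4 ≤ i ∧ i ≤ n' ∧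
      1 / 20 * dFn (i / B) < |(load z b i : ℝ) - i / B|} ≤ 2 / n ^ 11 := by
  set w := log n
  have hw1 : 1 ≤ w ^ 4 := one_le_pow₀ (le_trans (by norm_num) hn)
  have hn0 : (0 : ℝ) < n := by
    rcases n.eq_zero_or_pos with rfl | h
    · norm_num [w] at hn
    · exact_mod_cast h
  have hexp : exp (-(13 * w)) = (n ^ 13 : ℝ)⁻¹ := by
    rw [exp_neg, show 13 * w = log ((n : ℝ) ^ 13) by rw [log_pow]; push_cast; ring,
      exp_log (by positivity)]
  set S := (Icc 1 n').filter fun i : ℕ ↦ B * w ^ 4 ≤ i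
  set far := fun (i : ℕ) (b : Fin B) ↦
    {z : Fin n' → Fin B | 1 / 20 * dFn (i / B) < |(load z b i : ℝ) - i / B|}
  have hsub : {z | ∃ i : ℕ, ∃ b : Fin B, B * w ^ 4 ≤ i ∧ i ≤ n' ∧
      1 / 20 * dFn (i / B) < |(load z b i : ℝ) - i / B|} ⊆ ⋃ i ∈ S, ⋃ b, far i b := by
    rintro z ⟨i, b, hBi, hi, hfar⟩
    have hB1 : (1 : ℝ) ≤ B := Nat.one_le_cast.mpr NeZero.one_le
    have hi1 : 1 ≤ i := by exact_mod_cast (by nlinarith : (1 : ℝ) ≤ i)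
    simp only [Set.mem_iUnion]
    exact ⟨i, mem_filter.mpr ⟨mem_Icc.mpr ⟨hi1, hi⟩, hBi⟩, b, hfar⟩
  have hBn : ∀ i ∈ S, (B : ℝ) ≤ n := by
    intro i hi
    obtain ⟨hi, hBi⟩ := mem_filter.mp hi
    have : (i : ℝ) ≤ n := by exact_mod_cast (mem_Icc.mp hi).2.trans hn'
    nlinarith
  have hS : (#S : ℝ) ≤ n := by
    exact_mod_cast (card_filter_le _ _).trans ((Nat.card_Icc 1 n').trans_le (by omega))
  calc _ ≤ (uniformBins n' B).real (⋃ i ∈ S, ⋃ b, far i b) :=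
        measureReal_mono hsub (measure_ne_top _ _)
    _ ≤ ∑ i ∈ S, (uniformBins n' B).real (⋃ b, far i b) := measureReal_biUnion_finset_le _ _
    _ ≤ ∑ i ∈ S, ∑ b, (uniformBins n' B).real (far i b) :=
        sum_le_sum fun i _ ↦ measureReal_iUnion_fintype_le _
    _ ≤ ∑ i ∈ S, ∑ _b : Fin B, 2 * exp (-(13 * w)) := by
        gcongr with i hi b
        obtain ⟨hi, hBi⟩ := mem_filter.mp hi
        exact measureReal_load_far_le hn hBi (mem_Icc.mp hi).2 b
    _ = ∑ i ∈ S, B * (2 * (n ^ 13 : ℝ)⁻¹) := by simp [hexp]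
    _ ≤ ∑ _i ∈ S, n * (2 * (n ^ 13 : ℝ)⁻¹) := by gcongr with i hi; exact_mod_cast hBn i hi
    _ ≤ n * (n * (2 * (n ^ 13 : ℝ)⁻¹)) := by rw [sum_const, nsmul_eq_mul]; gcongr
    _ = 2 / n ^ 11 := by field_simp

end UniformBins

/-- Chernoff-type concentration for balls into bins: with probability `1 - O(1/n^11)`,
every prefix load (beyond time `B·(log n)^4`) is within `(1/20)·d(i/B)` of its mean. -/
theorem balls_in_bins_prefix_concentration :
    ∃ C : ℝ, 0 < C ∧ ∀ n B n' : ℕ, 2 ≤ n → 1 ≤ B → 1 ≤ n' → n' ≤ n →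
      ENNReal.ofReal (1 - C / (n : ℝ) ^ 11) ≤
        uniformBins n' B
          {z | ∀ i : ℕ, ∀ b : Fin B, (B : ℝ) * (Real.log n) ^ 4 ≤ (i : ℝ) → i ≤ n' →
            |(load z b i : ℝ) - (i : ℝ)/B| ≤ (1/20) * dFn ((i : ℝ)/B)} := by
  refine ⟨2 * exp (11 * 332800 ^ 3), by positivity, fun n B n' hn hB _ hn' ↦ ?_⟩
  have : NeZero B := ⟨by omega⟩
  have hn0 : (0 : ℝ) < n := by exact_mod_cast (by omega : 0 < n)
  rcases le_or_gt (log n) (332800 ^ 3) with hsmall | hlarge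
  · have hpow : (n : ℝ) ^ 11 ≤ exp (11 * 332800 ^ 3) := by
      rw [← exp_log (pow_pos hn0 11), log_pow]; gcongr; push_cast; linarith
    rw [ENNReal.ofReal_of_nonpos]
    · exact zero_le
    · rw [sub_nonpos, le_div_iff₀ (by positivity)]; linarith [exp_pos (11 * 332800 ^ 3 : ℝ)]
  · have hbad := measureReal_exists_load_far_le (B := B) hlarge.le hn'
    have hC : 2 / (n : ℝ) ^ 11 ≤ 2 * exp (11 * 332800 ^ 3) / n ^ 11 := by
      gcongr; linarith [one_le_exp (by positivity : (0 : ℝ) ≤ 11 * 332800 ^ 3)]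
    refine ofReal_one_sub_le_of_measureReal_compl_le .of_discrete
      ((measureReal_mono fun z hz ↦ ?_).trans (hbad.trans hC))
    simp only [Set.mem_compl_iff, Set.mem_ofPred_eq, not_forall, not_le, exists_prop] at hz ⊢
    exact hz
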